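/- arXiv:math/0703031 — 7 statements merged into one kernel-verified Lean document; each statement's English description precedes it below -/
import Mathlib

section
/- Let d ≥ 1 and 1 ≤ q ≤ d. For subsets I of {1,...,d} with |I| ≥ q, set ρ(I) = (-1)^{|I|-q} C(|I|-1, q-1). For x ∈ ℝ^d, let L_I^⊥ = {ξ ∈ ℝ^d : ξ_i = 0 for all i ∈ I}. Then the indicator function of the union ⋃_{|I|≥q} L_I^⊥ equals ∑_{|I|≥q} ρ(I) · (indicator of L_I^⊥), as functions on ℝ^d. -/
/-!
If `Z` is the set of coordinates where `ξ` vanishes, then `ξ ∈ L_I^⊥` iff `I ⊆ Z`, so both sides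
depend only on `m = |Z|`: the left side is `[q ≤ m]`, the right side is
`∑ k, (-1)^(k-q) C(m,k) C(k-1,q-1)`. That sum is `1` for `m ≥ q` by induction on `m`: Pascal's rule
splits it into the previous sum and `∑ j, (-1)^(j-r) C(m,j) C(j,r)` with `r = q - 1 < m`, which
vanishes because `C(m,j) C(j,r) = C(m,r) C(m-r,j-r)` turns it into an alternating binomial sum.
-/

open Finset

theorem sum_Icc_neg_one_pow_mul_choose_mul_choose {r m : ℕ} (h : r ≤ m) :
    ∑ j ∈ Icc r m, (-1 : ℤ) ^ (j - r) * m.choose j * j.choose r = if m = r then 1 else 0 := by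
  rw [← Ico_add_one_right_eq_Icc, sum_Ico_eq_sum_range, Nat.sub_add_comm h]
  calc ∑ t ∈ range (m - r + 1), (-1 : ℤ) ^ (r + t - r) * m.choose (r + t) * (r + t).choose r
      = m.choose r * ∑ t ∈ range (m - r + 1), (-1 : ℤ) ^ t * (m - r).choose t := by
        rw [mul_sum]
        refine sum_congr rfl fun t _ => ?_
        have := Nat.choose_mul (n := m) (Nat.le_add_right r t)
        rw [Nat.add_sub_cancel_left] at this ⊢
        rw [mul_assoc, ← Nat.cast_mul, this]
        push_cast
        ring
    _ = if m = r then 1 else 0 := by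
        rw [Int.alternating_sum_range_choose]
        by_cases hmr : m = r
        · simp [hmr]
        · simp [hmr, show m - r ≠ 0 by omega]

theorem sum_Icc_neg_one_pow_mul_choose_mul_choose_pred {q m : ℕ} (hq : 1 ≤ q) (hm : q ≤ m) :
    ∑ k ∈ Icc q m, (-1 : ℤ) ^ (k - q) * m.choose k * (k - 1).choose (q - 1) = 1 := by
  obtain ⟨r, rfl⟩ : ∃ r, q = r + 1 := ⟨q - 1, by omega⟩
  rw [Nat.add_sub_cancel]
  induction m, hm using Nat.le_induction with
  | base => simp
  | succ m hm ih =>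
    have shifted : ∑ k ∈ Icc (r + 1) (m + 1),
        (-1 : ℤ) ^ (k - (r + 1)) * m.choose (k - 1) * (k - 1).choose r = 0 := by
      rw [← map_add_right_Icc, sum_map]
      simpa [show m ≠ r by omega] using
        sum_Icc_neg_one_pow_mul_choose_mul_choose (r := r) (m := m) (by omega)
    have top : ∑ k ∈ Icc (r + 1) (m + 1),
        (-1 : ℤ) ^ (k - (r + 1)) * m.choose k * (k - 1).choose r = 1 := by
      rw [sum_Icc_succ_top (by omega), Nat.choose_succ_self, ih]
      simp
    have pascal : ∀ k ∈ Icc (r + 1) (m + 1),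
        (-1 : ℤ) ^ (k - (r + 1)) * (m + 1).choose k * (k - 1).choose r =
          (-1 : ℤ) ^ (k - (r + 1)) * m.choose (k - 1) * (k - 1).choose r +
            (-1 : ℤ) ^ (k - (r + 1)) * m.choose k * (k - 1).choose r := by
      intro k hk
      obtain ⟨j, rfl⟩ : ∃ j, k = j + 1 := ⟨k - 1, by simp at hk; omega⟩
      rw [Nat.choose_succ_succ', Nat.add_sub_cancel]
      push_cast
      ring
    rw [sum_congr rfl pascal, sum_add_distrib, shifted, top, zero_add]

theorem sum_powerset_filter_le_card_neg_one_pow_mul_choose {α : Type*} (Z : Finset α) {q : ℕ}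
    (hq : 1 ≤ q) :
    ∑ I ∈ Z.powerset with q ≤ #I, (-1 : ℤ) ^ (#I - q) * (#I - 1).choose (q - 1) =
      if q ≤ #Z then 1 else 0 := by
  rw [sum_filter, sum_powerset_apply_card
    (fun k => if q ≤ k then (-1 : ℤ) ^ (k - q) * (k - 1).choose (q - 1) else 0)]
  simp only [smul_ite, smul_zero]
  rw [← sum_filter]
  split_ifs with hZ
  · refine (sum_congr ?_ fun k _ => ?_).trans
      (sum_Icc_neg_one_pow_mul_choose_mul_choose_pred hq hZ)
    · ext k; simp only [mem_filter, mem_range, mem_Icc]; omega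
    · rw [nsmul_eq_mul]; ring
  · refine sum_eq_zero fun k hk => ?_
    simp only [mem_filter, mem_range] at hk
    omega

theorem iUnion_le_card_setOf_forall_eq_zero {ι M : Type*} [Fintype ι] [Zero M] [DecidableEq M]
    (q : ℕ) :
    ⋃ I ∈ {I : Finset ι | q ≤ #I}, {x : ι → M | ∀ i ∈ I, x i = 0} =
      {x | q ≤ #{i | x i = 0}} := by
  ext x
  simp only [Set.mem_iUnion, Set.mem_ofPred_eq, exists_prop]
  refine ⟨fun ⟨I, hI, hx⟩ => hI.trans (card_le_card fun i hi => ?_), fun h => ⟨_, h, ?_⟩⟩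
  · simpa using hx i hi
  · simp

theorem patchwork_indicator_identity_general (d q : ℕ) (hq : 1 ≤ q)
    (ρ : Finset (Fin d) → ℤ)
    (hρ : ∀ I : Finset (Fin d), q ≤ I.card →
      ρ I = (-1 : ℤ) ^ (I.card - q) * ((I.card - 1).choose (q - 1)))
    (ξ : Fin d → ℝ) :
    Set.indicator (⋃ I ∈ {I : Finset (Fin d) | q ≤ I.card},
        {x : Fin d → ℝ | ∀ i ∈ I, x i = 0}) (fun _ => (1 : ℝ)) ξ =
      ∑ I ∈ Finset.univ.powerset.filter (fun I : Finset (Fin d) => q ≤ I.card),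
        (ρ I : ℝ) *
          Set.indicator {x : Fin d → ℝ | ∀ i ∈ I, x i = 0} (fun _ => (1 : ℝ)) ξ := by
  set Z : Finset (Fin d) := {i | ξ i = 0}
  have rhs : ∑ I ∈ Finset.univ.powerset.filter (fun I : Finset (Fin d) => q ≤ I.card),
      (ρ I : ℝ) * Set.indicator {x : Fin d → ℝ | ∀ i ∈ I, x i = 0} (fun _ => (1 : ℝ)) ξ =
      ∑ I ∈ Z.powerset with q ≤ #I, ((-1 : ℤ) ^ (#I - q) * (#I - 1).choose (q - 1) : ℤ) := by
    simp only [Set.indicator_apply, Set.mem_ofPred_eq, mul_ite, mul_one, mul_zero]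
    rw [← sum_filter, filter_filter, Int.cast_sum]
    refine sum_congr (by ext I; simp [Z, subset_iff, and_comm]) fun I hI => ?_
    rw [hρ I (mem_filter.1 hI).2]
  rw [iUnion_le_card_setOf_forall_eq_zero, rhs,
    sum_powerset_filter_le_card_neg_one_pow_mul_choose Z hq]
  simp [Set.indicator_apply, Z]

theorem patchwork_indicator_identity (d q : ℕ) (hq : 1 ≤ q) (hd : q ≤ d)
    (ρ : Finset (Fin d) → ℤ)
    (hρ : ∀ I : Finset (Fin d), q ≤ I.card →
      ρ I = (-1 : ℤ) ^ (I.card - q) * ((I.card - 1).choose (q - 1)))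
    (ξ : Fin d → ℝ) :
    Set.indicator (⋃ I ∈ {I : Finset (Fin d) | q ≤ I.card},
        {x : Fin d → ℝ | ∀ i ∈ I, x i = 0}) (fun _ => (1 : ℝ)) ξ =
      ∑ I ∈ Finset.univ.powerset.filter (fun I : Finset (Fin d) => q ≤ I.card),
        (ρ I : ℝ) *
          Set.indicator {x : Fin d → ℝ | ∀ i ∈ I, x i = 0} (fun _ => (1 : ℝ)) ξ :=
  patchwork_indicator_identity_general d q hq ρ hρ ξ
end

section
/- Let ℒ be a finite family of linear subspaces of a finite-dimensional real inner product space V, closed under sum, and let ρ : ℒ → ℤ satisfy χ(⋃_{L∈ℒ} L^⊥) = ∑_{L∈ℒ} ρ(L) χ(L^⊥) as functions on V. Then for every L₀ ∈ ℒ, the sum ∑_{L∈ℒ, L⊆L₀} ρ(L) equals 1. -/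
open scoped Classical

theorem patchwork_sum_subspaces_contained_eq_one
    {V : Type*} [NormedAddCommGroup V] [InnerProductSpace ℝ V]
    [FiniteDimensional ℝ V]
    (ℒ : Finset (Submodule ℝ V))
    (hsum : ∀ L ∈ ℒ, ∀ L' ∈ ℒ, L ⊔ L' ∈ ℒ)
    (ρ : Submodule ℝ V → ℤ)
    (hρ : ∀ x : V,
      Set.indicator (⋃ L ∈ ℒ, ((Lᗮ : Submodule ℝ V) : Set V)) (fun _ => (1 : ℝ)) x =
        ∑ L ∈ ℒ, (ρ L : ℝ) *
          Set.indicator ((Lᗮ : Submodule ℝ V) : Set V) (fun _ => (1 : ℝ)) x)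
    (L₀ : Submodule ℝ V) (hL₀ : L₀ ∈ ℒ) :
    ∑ L ∈ ℒ.filter (fun L => L ≤ L₀), ρ L = 1 := by
  -- find x ∈ L₀ᗮ not in Lᗮ for any L ∈ ℒ with ¬ L ≤ L₀
  have hx : ∃ x ∈ L₀ᗮ, ∀ L ∈ ℒ, ¬ L ≤ L₀ → x ∉ Lᗮ := by
    by_contra h
    push_neg at h
    -- subspaces of W := L₀ᗮ
    set W := L₀ᗮ
    set s : Finset (Submodule ℝ W) :=
      (ℒ.filter (fun L => ¬ L ≤ L₀)).image (fun L => (Lᗮ).comap W.subtype) with hs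
    have hcover : ⋃ p ∈ s, (p : Set W) = Set.univ := by
      ext y
      simp only [Set.mem_iUnion, Set.mem_univ, iff_true, hs, Finset.mem_image,
        Finset.mem_filter]
      obtain ⟨L, hL, hnle, hy⟩ := h y y.2
      exact ⟨(Lᗮ).comap W.subtype, ⟨L, ⟨hL, hnle⟩, rfl⟩, hy⟩
    have htop := Subspace.top_mem_of_biUnion_eq_univ hcover
    rw [hs, Finset.mem_image] at htop
    obtain ⟨L, hL, hLtop⟩ := htop
    rw [Finset.mem_filter] at hL
    apply hL.2
    have hle : W ≤ Lᗮ := by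
      intro w hw
      have : (⟨w, hw⟩ : W) ∈ (⊤ : Submodule ℝ W) := trivial
      rw [← hLtop] at this
      exact this
    calc L ≤ Lᗮᗮ := Submodule.le_orthogonal_orthogonal L
      _ ≤ Wᗮ := Submodule.orthogonal_le hle
      _ = L₀ := Submodule.orthogonal_orthogonal L₀
  obtain ⟨x, hxW, hxL⟩ := hx
  have h1 := hρ x
  have hmem : x ∈ ⋃ L ∈ ℒ, ((Lᗮ : Submodule ℝ V) : Set V) := by
    exact Set.mem_biUnion hL₀ hxW
  rw [Set.indicator_of_mem hmem] at h1
  have hsplit : ∑ L ∈ ℒ, (ρ L : ℝ) *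
      Set.indicator ((Lᗮ : Submodule ℝ V) : Set V) (fun _ => (1 : ℝ)) x =
      ∑ L ∈ ℒ.filter (fun L => L ≤ L₀), (ρ L : ℝ) := by
    rw [← Finset.sum_filter_add_sum_filter_not ℒ (fun L => L ≤ L₀)]
    have h2 : ∑ L ∈ ℒ.filter (fun L => ¬ L ≤ L₀), (ρ L : ℝ) *
        Set.indicator ((Lᗮ : Submodule ℝ V) : Set V) (fun _ => (1 : ℝ)) x = 0 := by
      apply Finset.sum_eq_zero
      intro L hL
      rw [Finset.mem_filter] at hL
      rw [Set.indicator_of_notMem (hxL L hL.1 hL.2), mul_zero]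
    rw [h2, add_zero]
    apply Finset.sum_congr rfl
    intro L hL
    rw [Finset.mem_filter] at hL
    have : x ∈ Lᗮ := Submodule.orthogonal_le hL.2 hxW
    rw [Set.indicator_of_mem this, mul_one]
  rw [hsplit] at h1
  have : ((∑ L ∈ ℒ.filter (fun L => L ≤ L₀), ρ L : ℤ) : ℝ) = 1 := by
    push_cast
    exact h1.symm
  exact_mod_cast this
end

section
/- Let ℒ be a finite family of linear subspaces of a finite-dimensional real inner product space V, closed under sum, and let ρ : ℒ → ℤ satisfy χ(⋃_{L∈ℒ} L^⊥) = ∑_{L∈ℒ} ρ(L) χ(L^⊥) as functions on V. Then for any two subspaces L₀ ⊊ L₁ in ℒ, the sum ∑_{L∈ℒ, L+L₀ = L₁} ρ(L) equals 0. -/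
/-!
Evaluating the indicator identity at a point of `Mᗮ` lying in no `Lᗮ` other than those containing
`Mᗮ` (one exists because a real vector space is not a finite union of proper subspaces) gives
`∑_{L ∈ ℒ, L ≤ M} ρ L = 1` for every `M ∈ ℒ`. Grouping these `L` by `N = L ⊔ L₀`, the function
`f N = ∑_{L ⊔ L₀ = N} ρ L` has all partial sums `∑_{L₀ ≤ N ≤ M} f N` equal to `1` on the part of `ℒ`
above `L₀`; going up from its least element `L₀` this forces `f L₀ = 1` and `f N = 0` for `N ≠ L₀`.
-/

open scoped Classical

theorem Submodule.exists_generic_mem {k E : Type*} [DivisionRing k] [Infinite k] [AddCommGroup E]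
    [Module k E] (W : Submodule k E) (S : Finset (Submodule k E)) :
    ∃ x ∈ W, ∀ p ∈ S, x ∈ p → W ≤ p := by
  have htop : (⊤ : Submodule k W) ∉ {p ∈ S | ¬W ≤ p}.image (comap W.subtype) := by
    simp only [Finset.mem_image, Finset.mem_filter, comap_subtype_eq_top]
    rintro ⟨p, ⟨-, hWp⟩, hp⟩
    exact hWp hp
  obtain ⟨y, hy⟩ :=
    Set.ne_univ_iff_exists_notMem _ |>.mp (Subspace.biUnion_ne_univ_of_top_notMem htop)
  refine ⟨y, y.2, fun p hp hyp => by_contra fun hWp => hy ?_⟩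
  simp only [Set.mem_iUnion, SetLike.mem_coe]
  exact ⟨_, Finset.mem_image_of_mem _ (Finset.mem_filter.mpr ⟨hp, hWp⟩), hyp⟩

theorem Finset.eq_zero_of_forall_sum_filter_le_eq {α β : Type*} [PartialOrder α] [AddCommGroup β]
    {s : Finset α} {a : α} (ha : a ∈ s) (ha_le : ∀ N ∈ s, a ≤ N) {f : α → β} {c : β}
    (hf : ∀ M ∈ s, ∑ N ∈ s with N ≤ M, f N = c) {b : α} (hb : b ∈ s) (hba : b ≠ a) :
    f b = 0 := by
  have hfa : f a = c := by
    have hIic : {N ∈ s | N ≤ a} = {a} := by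
      ext N
      simp only [mem_filter, mem_singleton]
      exact ⟨fun h => le_antisymm h.2 (ha_le N h.1), by rintro rfl; exact ⟨ha, le_rfl⟩⟩
    simpa [hIic] using hf a ha
  revert hba
  refine (s.finite_toSet.wellFoundedOn (r := (· < ·))).induction hb
    (P := fun b => b ≠ a → f b = 0) fun M hM ih hMa => ?_
  have hsplit : ∑ N ∈ s with N ≤ M, f N = f a + f M := by
    refine sum_eq_add_of_mem a M (mem_filter.mpr ⟨ha, ha_le M hM⟩)
      (mem_filter.mpr ⟨hM, le_rfl⟩) (Ne.symm hMa) fun N hN hNe => ?_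
    obtain ⟨hNs, hNM⟩ := mem_filter.mp hN
    exact ih N hNs (lt_of_le_of_ne hNM hNe.2) hNe.1
  simpa [hfa] using (hsplit.symm.trans (hf M hM))

theorem Finset.sum_filter_sup_eq_eq_zero {α β : Type*} [Lattice α] [AddCommGroup β]
    {s : Finset α} {a b : α} (hs : ∀ L ∈ s, L ⊔ a ∈ s) {ρ : α → β} {c : β}
    (hρ : ∀ M ∈ s, ∑ L ∈ s with L ≤ M, ρ L = c) (ha : a ∈ s) (hb : b ∈ s) (hab : a < b) :
    ∑ L ∈ s with L ⊔ a = b, ρ L = 0 := by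
  refine eq_zero_of_forall_sum_filter_le_eq (s := {N ∈ s | a ≤ N}) (a := a)
    (f := fun N => ∑ L ∈ s with L ⊔ a = N, ρ L) (c := c) (mem_filter.mpr ⟨ha, le_rfl⟩)
    (fun N hN => (mem_filter.mp hN).2) (fun M hM => ?_) (mem_filter.mpr ⟨hb, hab.le⟩) hab.ne'
  obtain ⟨hMs, haM⟩ := mem_filter.mp hM
  have hmaps : ∀ L ∈ {L ∈ s | L ≤ M}, L ⊔ a ∈ {N ∈ {N ∈ s | a ≤ N} | N ≤ M} := by
    intro L hL
    obtain ⟨hLs, hLM⟩ := mem_filter.mp hL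
    exact mem_filter.mpr ⟨mem_filter.mpr ⟨hs L hLs, le_sup_right⟩, sup_le hLM haM⟩
  rw [← hρ M hMs, ← sum_fiberwise_of_maps_to hmaps]
  refine sum_congr rfl fun N hN => ?_
  rw [filter_filter]
  refine sum_congr (filter_congr fun L _ => ?_) fun _ _ => rfl
  exact ⟨fun h => ⟨le_sup_left.trans (h ▸ (mem_filter.mp hN).2), h⟩, And.right⟩

open Submodule in
theorem sum_filter_le_eq_one_of_indicator_iUnion_orthogonal {V : Type*} [NormedAddCommGroup V]
    [InnerProductSpace ℝ V] [FiniteDimensional ℝ V] {ℒ : Finset (Submodule ℝ V)}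
    {ρ : Submodule ℝ V → ℤ}
    (hρ : ∀ x : V,
      Set.indicator (⋃ L ∈ ℒ, ((Lᗮ : Submodule ℝ V) : Set V)) (fun _ => (1 : ℝ)) x =
        ∑ L ∈ ℒ, (ρ L : ℝ) *
          Set.indicator ((Lᗮ : Submodule ℝ V) : Set V) (fun _ => (1 : ℝ)) x)
    {M : Submodule ℝ V} (hM : M ∈ ℒ) :
    ∑ L ∈ ℒ with L ≤ M, ρ L = 1 := by
  obtain ⟨x, hxM, hx⟩ := Mᗮ.exists_generic_mem (ℒ.image (·ᗮ))
  have hmem : ∀ L ∈ ℒ, x ∈ Lᗮ ↔ L ≤ M := fun L hL =>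
    ⟨fun hxL => by simpa using orthogonal_le (hx _ (Finset.mem_image_of_mem _ hL) hxL),
      fun hLM => orthogonal_le hLM hxM⟩
  have hρx := hρ x
  rw [Set.indicator_of_mem (Set.mem_iUnion₂.mpr ⟨M, hM, hxM⟩)] at hρx
  rw [Finset.sum_congr rfl fun L hL => by
    rw [Set.indicator_apply, SetLike.mem_coe, hmem L hL, mul_ite, mul_one, mul_zero],
    ← Finset.sum_filter] at hρx
  exact_mod_cast hρx.symm

theorem patchwork_sum_subspaces_sum_eq_zero
    {V : Type*} [NormedAddCommGroup V] [InnerProductSpace ℝ V]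
    [FiniteDimensional ℝ V]
    (ℒ : Finset (Submodule ℝ V))
    (hsum : ∀ L ∈ ℒ, ∀ L' ∈ ℒ, L ⊔ L' ∈ ℒ)
    (ρ : Submodule ℝ V → ℤ)
    (hρ : ∀ x : V,
      Set.indicator (⋃ L ∈ ℒ, ((Lᗮ : Submodule ℝ V) : Set V)) (fun _ => (1 : ℝ)) x =
        ∑ L ∈ ℒ, (ρ L : ℝ) *
          Set.indicator ((Lᗮ : Submodule ℝ V) : Set V) (fun _ => (1 : ℝ)) x)
    (L₀ L₁ : Submodule ℝ V) (hL₀ : L₀ ∈ ℒ) (hL₁ : L₁ ∈ ℒ) (hlt : L₀ < L₁) :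
    ∑ L ∈ ℒ.filter (fun L => L ⊔ L₀ = L₁), ρ L = 0 :=
  Finset.sum_filter_sup_eq_eq_zero (fun L hL => hsum L hL L₀ hL₀)
    (fun _ hM => sum_filter_le_eq_one_of_indicator_iUnion_orthogonal hρ hM) hL₀ hL₁ hlt
end

section
/- Let v₁, v₂ ∈ ℤ² be primitive linearly independent integral vectors. Then the image of ℤ² under the quotient map ℝ² → ℝ²/ℝv₁ is the lattice generated by (1/|det(v₁,v₂)|) · v̄₂, where v̄₂ is the image of v₂. -/
/-!
The linear form `x ↦ det(v₁, x)` has kernel `ℝv₁`, so it identifies `ℝ²/ℝv₁` with `ℝ`, under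
which `v̄₂` becomes `d = det(v₁, v₂)`. Since `v₁` is primitive, Bézout shows that the form maps
`ℤ²` onto `ℤ`; hence the image of `ℤ²` is `ℤ · d⁻¹ v̄₂ = ℤ · |d|⁻¹ v̄₂`.
-/

open Submodule Set

section DetForm

variable {K : Type*}

def detForm [CommRing K] (v : Fin 2 → K) : (Fin 2 → K) →ₗ[K] K where
  toFun x := v 0 * x 1 - v 1 * x 0
  map_add' x y := by simp only [Pi.add_apply]; ring
  map_smul' c x := by simp only [Pi.smul_apply, smul_eq_mul, RingHom.id_apply]; ring

theorem detForm_apply [CommRing K] (v x : Fin 2 → K) : detForm v x = v 0 * x 1 - v 1 * x 0 :=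
  rfl

variable [Field K] {v : Fin 2 → K}

theorem ker_detForm (hv : v ≠ 0) : LinearMap.ker (detForm v) = K ∙ v := by
  refine le_antisymm (fun x hx => ?_) ((span_singleton_le_iff_mem _ _).2 ?_)
  · rw [LinearMap.mem_ker, detForm_apply, sub_eq_zero] at hx
    rw [mem_span_singleton]
    have hv' : v 0 ≠ 0 ∨ v 1 ≠ 0 := by
      by_contra! h
      exact hv (funext fun i => by fin_cases i <;> simp [h.1, h.2])
    rcases hv' with h0 | h1
    · refine ⟨x 0 / v 0, funext fun i => ?_⟩
      fin_cases i
      · simp [h0]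
      · simp only [Fin.mk_one, Pi.smul_apply, smul_eq_mul]
        field_simp
        linear_combination -hx
    · refine ⟨x 1 / v 1, funext fun i => ?_⟩
      fin_cases i
      · simp only [Fin.zero_eta, Pi.smul_apply, smul_eq_mul]
        field_simp
        linear_combination hx
      · simp [h1]
  · rw [LinearMap.mem_ker, detForm_apply]
    ring

theorem mkQ_eq_mkQ_iff_detForm_eq (hv : v ≠ 0) {x z : Fin 2 → K} :
    (K ∙ v).mkQ x = (K ∙ v).mkQ z ↔ detForm v x = detForm v z := by
  rw [mkQ_apply, mkQ_apply, Submodule.Quotient.eq, ← ker_detForm hv, LinearMap.mem_ker, map_sub,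
    sub_eq_zero]

theorem mkQ_eq_detForm_div_smul (hv : v ≠ 0) {w : Fin 2 → K} (hw : detForm v w ≠ 0)
    (x : Fin 2 → K) :
    (K ∙ v).mkQ x = (detForm v x / detForm v w) • (K ∙ v).mkQ w := by
  rw [← map_smul, mkQ_eq_mkQ_iff_detForm_eq hv, map_smul, smul_eq_mul, div_mul_cancel₀ _ hw]

end DetForm

theorem detForm_intCast_image_integral {v : Fin 2 → ℤ} (hv : IsCoprime (v 0) (v 1)) :
    detForm (fun i => (v i : ℝ)) '' {x | ∀ i, ∃ n : ℤ, x i = n} = range ((↑) : ℤ → ℝ) := by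
  ext t
  constructor
  · rintro ⟨x, hx, rfl⟩
    choose m hm using hx
    exact ⟨v 0 * m 1 - v 1 * m 0, by rw [detForm_apply, hm 0, hm 1]; push_cast; ring⟩
  · rintro ⟨k, rfl⟩
    obtain ⟨a, b, hab⟩ := hv
    refine ⟨fun i => ((k * ![-b, a] i : ℤ) : ℝ), fun i => ⟨_, rfl⟩, ?_⟩
    rw [detForm_apply]
    simp only [Matrix.cons_val_zero, Matrix.cons_val_one]
    have hab' : (a : ℝ) * v 0 + b * v 1 = 1 := by exact_mod_cast hab
    push_cast
    linear_combination (k : ℝ) * hab'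

theorem range_intCast_div_abs {K : Type*} [Field K] [LinearOrder K] [IsStrictOrderedRing K]
    (d : K) : range (fun n : ℤ => (n : K) / |d|) = range (fun k : ℤ => (k : K) / d) := by
  rcases abs_choice d with h | h <;> rw [h]
  ext t
  constructor <;> rintro ⟨n, rfl⟩ <;> exact ⟨-n, by simp [neg_div, div_neg]⟩

/-- The image of `ℤ²` in `ℝ²/ℝv₁` is the lattice generated by `v̄₂ / |det(v₁,v₂)|`. -/
theorem projected_lattice_eq (v₁ v₂ : Fin 2 → ℤ)
    (hprim : IsCoprime (v₁ 0) (v₁ 1))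
    (hdet : v₁ 0 * v₂ 1 - v₁ 1 * v₂ 0 ≠ 0) :
    let v₁ℝ : Fin 2 → ℝ := fun i => (v₁ i : ℝ)
    let v₂ℝ : Fin 2 → ℝ := fun i => (v₂ i : ℝ)
    let π := (Submodule.span ℝ ({v₁ℝ} : Set (Fin 2 → ℝ))).mkQ
    π '' {x : Fin 2 → ℝ | ∀ i, ∃ n : ℤ, x i = (n : ℝ)} =
      {y | ∃ n : ℤ, y = n • ((|((v₁ 0 * v₂ 1 - v₁ 1 * v₂ 0 : ℤ) : ℝ)|)⁻¹ • π v₂ℝ)} := by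
  intro v₁ℝ v₂ℝ π
  set d : ℤ := v₁ 0 * v₂ 1 - v₁ 1 * v₂ 0
  have hv₁ : v₁ℝ ≠ 0 := fun h => by
    have h0 : v₁ 0 = 0 := by simpa [v₁ℝ] using congrFun h 0
    have h1 : v₁ 1 = 0 := by simpa [v₁ℝ] using congrFun h 1
    simp [h0, h1, isCoprime_zero_left] at hprim
  have hd : detForm v₁ℝ v₂ℝ = d := by simp only [detForm_apply, v₁ℝ, v₂ℝ, d]; push_cast; ring
  have hπ (x : Fin 2 → ℝ) : π x = (detForm v₁ℝ x / d) • π v₂ℝ :=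
    hd ▸ mkQ_eq_detForm_div_smul hv₁ (hd ▸ Int.cast_ne_zero.2 hdet) x
  calc π '' {x | ∀ i, ∃ n : ℤ, x i = n}
      = (· • π v₂ℝ) '' ((· / (d : ℝ)) '' (detForm v₁ℝ '' {x | ∀ i, ∃ n : ℤ, x i = n})) := by
        simp only [image_image]
        exact image_congr fun x _ => hπ x
    _ = (· • π v₂ℝ) '' range (fun k : ℤ => (k : ℝ) / d) := by
        rw [detForm_intCast_image_integral hprim, ← range_comp]
        rfl
    _ = {y | ∃ n : ℤ, y = n • ((|(d : ℝ)|)⁻¹ • π v₂ℝ)} := by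
        rw [← range_intCast_div_abs, ← range_comp]
        ext y
        simp only [mem_range, mem_ofPred_eq, Function.comp_apply, eq_comm, div_eq_mul_inv,
          mul_smul, Int.cast_smul_eq_zsmul]
end

section
/- Let v₁, v₂ ∈ ℤ² be linearly independent with det(v₁,v₂) > 0, and let u ∈ ℤ² be primitive with det(u,v₂) > 0 and det(u,v₁) ≠ 0. Let 𝔞 = ℝ₊v₁ + ℝ₊v₂ and 𝔞ᵢ = ℝ₊u + ℝ₊vᵢ. Then χ(𝔞) = χ(𝔞₂) + χ(𝔞₁) − χ(ℝ₊u) if u ∈ 𝔞, and χ(𝔞) = χ(𝔞₂) − χ(𝔞₁) + χ(ℝ₊v₁) if u ∉ 𝔞, as functions on ℝ². -/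
/-!
A ray strictly inside a convex plane cone splits it into two cones meeting along that ray, so
by inclusion–exclusion `χ(cone a c) = χ(cone a b) + χ(cone b c) - χ(ray b)` whenever `b` lies
strictly between `a` and `c`. If `u ∈ 𝔞` this applies to `(a, b, c) = (v₁, u, v₂)`; otherwise
`v₁` lies between `u` and `v₂`, and it applies to `(u, v₁, v₂)`.
-/

namespace Plane

variable {R 𝕜 : Type*}

def det [CommRing R] (v w : Fin 2 → R) : R := v 0 * w 1 - v 1 * w 0

def cone [Semiring R] [PartialOrder R] (w₁ w₂ : Fin 2 → R) : Set (Fin 2 → R) :=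
  {x | ∃ a b : R, 0 ≤ a ∧ 0 ≤ b ∧ x = a • w₁ + b • w₂}

def ray [Semiring R] [PartialOrder R] (w : Fin 2 → R) : Set (Fin 2 → R) :=
  {x | ∃ a : R, 0 ≤ a ∧ x = a • w}

theorem cone_comm [Semiring R] [PartialOrder R] (w₁ w₂ : Fin 2 → R) :
    cone w₁ w₂ = cone w₂ w₁ := by
  ext x
  constructor <;> rintro ⟨a, b, ha, hb, rfl⟩ <;> exact ⟨b, a, hb, ha, add_comm _ _⟩

section CommRing

variable [CommRing R]

theorem det_comm (v w : Fin 2 → R) : det w v = -det v w := by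
  unfold det; ring

@[simp]
theorem det_self (v : Fin 2 → R) : det v v = 0 := by
  unfold det; ring

theorem det_add_smul (v w₁ w₂ : Fin 2 → R) (a b : R) :
    det v (a • w₁ + b • w₂) = a * det v w₁ + b * det v w₂ := by
  simp only [det, Pi.add_apply, Pi.smul_apply, smul_eq_mul]; ring

theorem det_smul_add_smul (v w₁ w₂ : Fin 2 → R) (a b : R) :
    det (a • w₁ + b • w₂) v = a * det w₁ v + b * det w₂ v := by
  simp only [det, Pi.add_apply, Pi.smul_apply, smul_eq_mul]; ring

/-- Cramer's rule. -/
theorem det_smul_eq (v w x : Fin 2 → R) : det v w • x = det x w • v + det v x • w := by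
  funext i
  fin_cases i <;> simp [det] <;> ring

theorem det_intCast (v w : Fin 2 → ℤ) :
    det (fun i => (v i : R)) (fun i => (w i : R)) = det v w := by
  simp [det]

/-- The Plücker relation, from pairing `det b c • a + det c a • b + det a b • c = 0` with `x`. -/
theorem det_mul_det (a b c x : Fin 2 → R) :
    det a c * det b x = det b c * det a x + det a b * det c x := by
  unfold det; ring

end CommRing

section Field

variable [Field 𝕜] [LinearOrder 𝕜] [IsStrictOrderedRing 𝕜]

theorem mem_cone_iff {w₁ w₂ x : Fin 2 → 𝕜} (h : 0 < det w₁ w₂) :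
    x ∈ cone w₁ w₂ ↔ 0 ≤ det w₁ x ∧ 0 ≤ det x w₂ := by
  constructor
  · rintro ⟨a, b, ha, hb, rfl⟩
    rw [det_add_smul, det_smul_add_smul, det_self, det_self]
    constructor <;> nlinarith
  · rintro ⟨h₁, h₂⟩
    refine ⟨det x w₂ / det w₁ w₂, det w₁ x / det w₁ w₂, by positivity, by positivity, ?_⟩
    rw [div_eq_inv_mul, div_eq_inv_mul, mul_smul, mul_smul, ← smul_add, ← det_smul_eq,
      inv_smul_smul₀ h.ne']

theorem mem_ray_iff {v w x : Fin 2 → 𝕜} (h : 0 < det v w) :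
    x ∈ ray w ↔ det w x = 0 ∧ 0 ≤ det v x := by
  constructor
  · rintro ⟨a, ha, rfl⟩
    have hw : det w (a • w) = a * det w w := by simpa using det_add_smul w w w a 0
    have hv : det v (a • w) = a * det v w := by simpa using det_add_smul v w w a 0
    rw [hw, hv, det_self, mul_zero]
    exact ⟨rfl, by positivity⟩
  · rintro ⟨h₁, h₂⟩
    refine ⟨det v x / det v w, by positivity, ?_⟩
    have hx := det_smul_eq v w x
    rw [det_comm w x, h₁, neg_zero, zero_smul, zero_add] at hx
    rw [div_eq_inv_mul, mul_smul, ← hx, inv_smul_smul₀ h.ne']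

variable {a b c : Fin 2 → 𝕜}

theorem cone_eq_union (hab : 0 < det a b) (hbc : 0 < det b c) (hac : 0 < det a c) :
    cone a c = cone a b ∪ cone b c := by
  ext x
  have hx := det_mul_det a b c x
  simp only [Set.mem_union, mem_cone_iff hab, mem_cone_iff hbc, mem_cone_iff hac,
    det_comm _ x] at hx ⊢
  constructor
  · rintro ⟨hax, hcx⟩
    rcases le_total 0 (det b x) with hbx | hbx
    · exact Or.inr ⟨hbx, hcx⟩
    · exact Or.inl ⟨hax, by linarith⟩
  · rintro (⟨hax, hbx⟩ | ⟨hbx, hcx⟩)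
    · exact ⟨hax, by nlinarith⟩
    · exact ⟨by nlinarith, hcx⟩

theorem cone_inter_cone (hab : 0 < det a b) (hbc : 0 < det b c) :
    cone a b ∩ cone b c = ray b := by
  ext x
  simp only [Set.mem_inter_iff, mem_cone_iff hab, mem_cone_iff hbc, mem_ray_iff hab,
    det_comm _ x]
  constructor
  · rintro ⟨⟨hax, hbx⟩, hbx', -⟩
    exact ⟨by linarith, hax⟩
  · rintro ⟨hbx, hax⟩
    have hx := det_mul_det b a c x
    rw [hbx, det_comm a b] at hx
    exact ⟨⟨hax, by linarith⟩, ⟨by linarith, by nlinarith⟩⟩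

theorem indicator_cone_eq {M : Type*} [AddCommGroup M] (hab : 0 < det a b) (hbc : 0 < det b c)
    (hac : 0 < det a c) (f : (Fin 2 → 𝕜) → M) :
    (cone a c).indicator f =
      (cone a b).indicator f + (cone b c).indicator f - (ray b).indicator f := by
  funext x
  rw [cone_eq_union hab hbc hac, ← cone_inter_cone hab hbc, Pi.sub_apply, Pi.add_apply,
    eq_sub_iff_add_eq, Set.indicator_union_add_inter_apply]

end Field

end Plane

theorem cone_indicator_decomposition_general (v₁ v₂ u : Fin 2 → ℤ)
    (hdet : 0 < v₁ 0 * v₂ 1 - v₁ 1 * v₂ 0)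
    (hdet2 : 0 < u 0 * v₂ 1 - u 1 * v₂ 0)
    (hdet1 : u 0 * v₁ 1 - u 1 * v₁ 0 ≠ 0) :
    let v₁ℝ : Fin 2 → ℝ := fun i => (v₁ i : ℝ)
    let v₂ℝ : Fin 2 → ℝ := fun i => (v₂ i : ℝ)
    let uℝ : Fin 2 → ℝ := fun i => (u i : ℝ)
    let cone : (Fin 2 → ℝ) → (Fin 2 → ℝ) → Set (Fin 2 → ℝ) :=
      fun w₁ w₂ => {x | ∃ a b : ℝ, 0 ≤ a ∧ 0 ≤ b ∧ x = a • w₁ + b • w₂}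
    let ray : (Fin 2 → ℝ) → Set (Fin 2 → ℝ) := fun w => {x | ∃ a : ℝ, 0 ≤ a ∧ x = a • w}
    let χ : Set (Fin 2 → ℝ) → (Fin 2 → ℝ) → ℝ := fun S => Set.indicator S (fun _ => 1)
    (uℝ ∈ cone v₁ℝ v₂ℝ → ∀ x, χ (cone v₁ℝ v₂ℝ) x =
        χ (cone uℝ v₂ℝ) x + χ (cone uℝ v₁ℝ) x - χ (ray uℝ) x) ∧
    (uℝ ∉ cone v₁ℝ v₂ℝ → ∀ x, χ (cone v₁ℝ v₂ℝ) x =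
        χ (cone uℝ v₂ℝ) x - χ (cone uℝ v₁ℝ) x + χ (ray v₁ℝ) x) := by
  intro v₁ℝ v₂ℝ uℝ cone ray χ
  have hv₁v₂ : 0 < Plane.det v₁ℝ v₂ℝ := by rw [Plane.det_intCast]; exact_mod_cast hdet
  have huv₂ : 0 < Plane.det uℝ v₂ℝ := by rw [Plane.det_intCast]; exact_mod_cast hdet2
  have hv₁u : Plane.det v₁ℝ uℝ ≠ 0 := by
    rw [Plane.det_comm, neg_ne_zero, Plane.det_intCast]; exact_mod_cast hdet1
  have hu : uℝ ∈ cone v₁ℝ v₂ℝ ↔ 0 < Plane.det v₁ℝ uℝ := by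
    change uℝ ∈ Plane.cone v₁ℝ v₂ℝ ↔ _
    rw [Plane.mem_cone_iff hv₁v₂]
    exact ⟨fun h => h.1.lt_of_ne' hv₁u, fun h => ⟨h.le, huv₂.le⟩⟩
  refine ⟨fun hmem x => ?_, fun hmem x => ?_⟩
  · have h : χ (cone v₁ℝ v₂ℝ) x = χ (cone v₁ℝ uℝ) x + χ (cone uℝ v₂ℝ) x - χ (ray uℝ) x :=
      congrFun (Plane.indicator_cone_eq (hu.mp hmem) huv₂ hv₁v₂ _) x
    rw [show cone v₁ℝ uℝ = cone uℝ v₁ℝ from Plane.cone_comm _ _] at h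
    linarith
  · have hv₁ : 0 < Plane.det uℝ v₁ℝ := by
      rw [Plane.det_comm, neg_pos]
      exact (not_lt.mp (hu.not.mp hmem)).lt_of_ne hv₁u
    have h : χ (cone uℝ v₂ℝ) x = χ (cone uℝ v₁ℝ) x + χ (cone v₁ℝ v₂ℝ) x - χ (ray v₁ℝ) x :=
      congrFun (Plane.indicator_cone_eq hv₁ hv₁v₂ huv₂ _) x
    linarith

/-- Decomposition of the characteristic function of the cone `ℝ₊v₁ + ℝ₊v₂`
using the cones `ℝ₊u + ℝ₊vᵢ`. -/
theorem cone_indicator_decomposition (v₁ v₂ u : Fin 2 → ℤ)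
    (hdet : 0 < v₁ 0 * v₂ 1 - v₁ 1 * v₂ 0)
    (huprim : IsCoprime (u 0) (u 1))
    (hdet2 : 0 < u 0 * v₂ 1 - u 1 * v₂ 0)
    (hdet1 : u 0 * v₁ 1 - u 1 * v₁ 0 ≠ 0) :
    let v₁ℝ : Fin 2 → ℝ := fun i => (v₁ i : ℝ)
    let v₂ℝ : Fin 2 → ℝ := fun i => (v₂ i : ℝ)
    let uℝ : Fin 2 → ℝ := fun i => (u i : ℝ)
    let cone : (Fin 2 → ℝ) → (Fin 2 → ℝ) → Set (Fin 2 → ℝ) :=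
      fun w₁ w₂ => {x | ∃ a b : ℝ, 0 ≤ a ∧ 0 ≤ b ∧ x = a • w₁ + b • w₂}
    let ray : (Fin 2 → ℝ) → Set (Fin 2 → ℝ) := fun w => {x | ∃ a : ℝ, 0 ≤ a ∧ x = a • w}
    let χ : Set (Fin 2 → ℝ) → (Fin 2 → ℝ) → ℝ := fun S => Set.indicator S (fun _ => 1)
    (uℝ ∈ cone v₁ℝ v₂ℝ → ∀ x, χ (cone v₁ℝ v₂ℝ) x =
        χ (cone uℝ v₂ℝ) x + χ (cone uℝ v₁ℝ) x - χ (ray uℝ) x) ∧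
    (uℝ ∉ cone v₁ℝ v₂ℝ → ∀ x, χ (cone v₁ℝ v₂ℝ) x =
        χ (cone uℝ v₂ℝ) x - χ (cone uℝ v₁ℝ) x + χ (ray v₁ℝ) x) :=
  cone_indicator_decomposition_general v₁ v₂ u hdet hdet2 hdet1
end

section
/- Let p ⊂ ℝ^d be a polytope with vertex set V(p), and for a vertex s let the supporting cone be s + c_s. Suppose for each vertex s we have a meromorphic germ F_s(ξ) at 0 ∈ (ℝ^d)* such that ∑_{s ∈ V(p)} e^{n⟨ξ,s⟩} F_s(ξ) is analytic at ξ = 0 for every n ∈ ℕ, and each F_s lies in the space of quotients of analytic germs by products of linear forms, with homogeneous decomposition F_s = ∑_j (F_s)_{[j]}. Then for each m ≥ 0, the function ξ ↦ (1/m!) ∑_{s ∈ V(p)} ⟨ξ,s⟩^m F_s(ξ) is analytic at ξ = 0, and its value at 0 equals (1/m!)∑_s (⟨ξ,s⟩^m F_s(ξ))_{[0]} evaluated as the constant degree-0 term. -/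
/-
Fix `ξ ∈ U` and look along the ray `t ↦ t • ξ`. Homogeneity turns
`∑ s, exp (n ⟨t ξ, s⟩) F s (t ξ)` into `∑ j, t ^ j ∑ s, exp (n t ⟨ξ, s⟩) (F s)_[j] ξ`.
Lagrange interpolation gives weights `w 0, …, w D` with `∑ n, w n n ^ i = δ i m` for `i ≤ D`,
so that `∑ n, w n exp (n x) = x ^ m / m! + O(x ^ (D + 1))`. Hence the analytic germ
`∑ n, w n G n` equals `∑ j, t ^ (j + m) γ j ξ + O(t ^ N)` along the ray, where
`γ j ξ = (1/m!) ∑ s, ⟨ξ, s⟩ ^ m (F s)_[j] ξ`. A Laurent polynomial in `t` that is `O(t ^ N)` with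
all exponents below `N` vanishes, so comparing with the Taylor expansion of the germ shows that its
Taylor polynomial `H` of order `N` satisfies `H ξ = ∑ j, γ j ξ` and `H 0 = γ (-m) ξ`.
-/

open Filter Topology Asymptotics Finset
open scoped Nat

section Laurent

variable {𝕜 E : Type*} [NontriviallyNormedField 𝕜] [NormedAddCommGroup E] [NormedSpace 𝕜 E]

theorem tendsto_zpow_nhdsNE_zero {n : ℤ} (hn : 0 < n) :
    Tendsto (fun t : 𝕜 => t ^ n) (𝓝[≠] 0) (𝓝 0) := by
  have := (continuousAt_zpow₀ (0 : 𝕜) n (.inr hn.le)).tendsto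
  rw [zero_zpow n hn.ne'] at this
  exact this.mono_left nhdsWithin_le_nhds

theorem isBigO_zpow_of_le {a b : ℤ} (hab : a ≤ b) :
    (fun t : 𝕜 => t ^ b) =O[𝓝[≠] 0] fun t => t ^ a := by
  have hbdd : (fun t : 𝕜 => t ^ (b - a)) =O[𝓝[≠] 0] fun _ => (1 : 𝕜) :=
    ((continuousAt_zpow₀ (0 : 𝕜) (b - a) (.inr (sub_nonneg.2 hab))).tendsto.isBigO_one 𝕜).mono
      nhdsWithin_le_nhds
  refine (hbdd.mul (isBigO_refl (fun t : 𝕜 => t ^ a) _)).congr' ?_ (by simp)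
  filter_upwards [self_mem_nhdsWithin] with t (ht : t ≠ 0)
  rw [← zpow_add₀ ht, sub_add_cancel]

theorem eq_zero_of_sum_zpow_smul_isBigO {N : ℤ} {c : ℤ → E} {Q : Finset ℤ} (hQ : ∀ q ∈ Q, q < N)
    (h : (fun t : 𝕜 => ∑ q ∈ Q, t ^ q • c q) =O[𝓝[≠] 0] fun t => t ^ N) :
    ∀ q ∈ Q, c q = 0 := by
  induction Q using Finset.induction_on_min with
  | empty => simp
  | insert a s has ih =>
    have has' : a ∉ s := fun ha => lt_irrefl a (has a ha)
    have hshift : (fun t : 𝕜 => t ^ (-a) • ∑ q ∈ insert a s, t ^ q • c q)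
        =ᶠ[𝓝[≠] 0] fun t => c a + ∑ q ∈ s, t ^ (q - a) • c q := by
      filter_upwards [self_mem_nhdsWithin] with t (ht : t ≠ 0)
      simp only [sum_insert has', smul_add, smul_sum, smul_smul,
        ← zpow_add₀ ht, neg_add_cancel, zpow_zero, one_smul, neg_add_eq_sub]
    -- divided by `t ^ a`, the sum tends to `c a`, but it is also `O(t ^ (N - a))` with `a < N`
    have hlim : Tendsto (fun t : 𝕜 => c a + ∑ q ∈ s, t ^ (q - a) • c q) (𝓝[≠] 0) (𝓝 (c a)) := by
      have := tendsto_finsetSum s fun q hq =>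
        (tendsto_zpow_nhdsNE_zero (𝕜 := 𝕜) (sub_pos.2 (has q hq))).smul_const (c q)
      simpa using tendsto_const_nhds.add this
    have hlim' : Tendsto (fun t : 𝕜 => c a + ∑ q ∈ s, t ^ (q - a) • c q) (𝓝[≠] 0) (𝓝 0) := by
      refine (((isBigO_refl (fun t : 𝕜 => t ^ (-a)) _).smul h).congr' hshift ?_).trans_tendsto
        (tendsto_zpow_nhdsNE_zero (sub_pos.2 (hQ a (mem_insert_self a s))))
      filter_upwards [self_mem_nhdsWithin] with t (ht : t ≠ 0)
      rw [smul_eq_mul, ← zpow_add₀ ht, neg_add_eq_sub]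
    have hca : c a = 0 := tendsto_nhds_unique hlim hlim'
    have hs := ih (fun q hq => hQ q (mem_insert_of_mem hq))
      (by simpa [sum_insert has', hca] using h)
    simpa [hca] using hs

variable {ι : Type*} {I : Finset ι} {e : ι → ℤ} {a : ι → E} {N : ℤ}

theorem sum_filter_eq_zero_of_sum_zpow_smul_isBigO (he : ∀ i ∈ I, e i < N)
    (h : (fun t : 𝕜 => ∑ i ∈ I, t ^ e i • a i) =O[𝓝[≠] 0] fun t => t ^ N) (q : ℤ) :
    ∑ i ∈ I with e i = q, a i = 0 := by
  classical
  have hfib : (fun t : 𝕜 => ∑ q ∈ I.image e, t ^ q • ∑ i ∈ I with e i = q, a i) =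
      fun t => ∑ i ∈ I, t ^ e i • a i := by
    ext t
    simp only [smul_sum]
    rw [← sum_fiberwise_of_maps_to (fun i hi => mem_image_of_mem e hi)]
    exact sum_congr rfl fun q _ => sum_congr rfl fun i hi => by rw [(mem_filter.1 hi).2]
  by_cases hq : q ∈ I.image e
  · refine eq_zero_of_sum_zpow_smul_isBigO (fun q hq => ?_) (hfib ▸ h) q hq
    obtain ⟨i, hi, rfl⟩ := mem_image.1 hq
    exact he i hi
  · refine sum_eq_zero fun i hi => absurd ?_ hq
    rw [mem_filter] at hi
    exact hi.2 ▸ mem_image_of_mem e hi.1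

theorem sum_eq_zero_of_sum_zpow_smul_isBigO (he : ∀ i ∈ I, e i < N)
    (h : (fun t : 𝕜 => ∑ i ∈ I, t ^ e i • a i) =O[𝓝[≠] 0] fun t => t ^ N) :
    ∑ i ∈ I, a i = 0 := by
  classical
  rw [← sum_fiberwise_of_maps_to (fun i hi => mem_image_of_mem e hi)]
  exact sum_eq_zero fun q _ => sum_filter_eq_zero_of_sum_zpow_smul_isBigO he h q

end Laurent

section PowerSeries

variable {𝕜 E F : Type*} [NontriviallyNormedField 𝕜] [NormedAddCommGroup E] [NormedSpace 𝕜 E]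
  [NormedAddCommGroup F] [NormedSpace 𝕜 F]

theorem FormalMultilinearSeries.partialSum_smul (p : FormalMultilinearSeries 𝕜 E F) (n : ℕ)
    (t : 𝕜) (x : E) : p.partialSum n (t • x) = ∑ k ∈ range n, t ^ k • p k (fun _ => x) := by
  refine sum_congr rfl fun k _ => ?_
  simpa using (p k).map_smul_univ (fun _ => t) (fun _ => x)

theorem HasFPowerSeriesAt.isBigO_sub_partialSum_smul {f : E → F}
    {p : FormalMultilinearSeries 𝕜 E F} (hf : HasFPowerSeriesAt f p 0) (x : E) (n : ℕ) :
    (fun t : 𝕜 => f (t • x) - p.partialSum n (t • x)) =O[𝓝 0] fun t => t ^ n := by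
  have hray : Tendsto (fun t : 𝕜 => t • x) (𝓝 0) (𝓝 0) := by
    simpa using (continuous_id.smul continuous_const).tendsto (0 : 𝕜) (f := fun t : 𝕜 => t • x)
  have hnorm : (fun t : 𝕜 => ‖t • x‖ ^ n) =O[𝓝 0] fun t => t ^ n :=
    IsBigO.of_bound (‖x‖ ^ n) (Eventually.of_forall fun t => by simp [norm_smul, mul_pow, mul_comm])
  simpa [Function.comp_def] using ((hf.isBigO_sub_partialSum_pow n).comp_tendsto hray).trans hnorm

theorem FormalMultilinearSeries.analyticAt_partialSum (p : FormalMultilinearSeries 𝕜 E F) (n : ℕ)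
    (x : E) : AnalyticAt 𝕜 (p.partialSum n) x :=
  Finset.analyticAt_fun_sum _ fun k _ =>
    (p k).analyticAt.comp (analyticAt_pi_iff.2 fun _ => analyticAt_id)

theorem FormalMultilinearSeries.partialSum_zero (p : FormalMultilinearSeries 𝕜 E F) (n : ℕ)
    (x : E) :
    p.partialSum n 0 = ∑ k ∈ range n with k = 0, p k (fun _ => x) := by
  rw [FormalMultilinearSeries.partialSum, sum_filter]
  refine sum_congr rfl fun k _ => ?_
  split_ifs with hk
  · subst hk; congr 1; exact Subsingleton.elim _ _
  · have : Nonempty (Fin k) := ⟨⟨0, Nat.pos_of_ne_zero hk⟩⟩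
    exact (p k).map_zero

theorem HasFPowerSeriesAt.partialSum_eq_of_isBigO {ι : Type*} {f : E → F}
    {p : FormalMultilinearSeries 𝕜 E F} (hf : HasFPowerSeriesAt f p 0) {x : E} {N : ℕ}
    {J : Finset ι} {e : ι → ℤ} {a : ι → F} (he : ∀ j ∈ J, e j < N)
    (h : (fun t : 𝕜 => f (t • x) - ∑ j ∈ J, t ^ e j • a j) =O[𝓝[≠] 0] fun t => t ^ (N : ℤ)) :
    p.partialSum N x = ∑ j ∈ J, a j ∧ p.partialSum N 0 = ∑ j ∈ J with e j = 0, a j := by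
  set e' : ℕ ⊕ ι → ℤ := Sum.elim (↑) e
  set a' : ℕ ⊕ ι → F := Sum.elim (fun k => p k fun _ => x) (fun j => -a j)
  have he' : ∀ i ∈ (range N).disjSum J, e' i < N := by
    rintro (k | j) hi
    · simpa [e'] using hi
    · simpa [e'] using he j (by simpa using hi)
  -- the Taylor terms `t ^ k • p k x` and the terms `-(t ^ e j • a j)` form one Laurent sum
  have hlaurent : (fun t : 𝕜 => ∑ i ∈ (range N).disjSum J, t ^ e' i • a' i)
      =O[𝓝[≠] 0] fun t => t ^ (N : ℤ) := by
    have htaylor := (hf.isBigO_sub_partialSum_smul x N).mono (nhdsWithin_le_nhds (s := {0}ᶜ))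
    simp only [← zpow_natCast] at htaylor
    refine (h.sub htaylor).congr_left fun t => ?_
    simp only [e', a', sum_disjSum, Sum.elim_inl, Sum.elim_inr, zpow_natCast, smul_neg,
      sum_neg_distrib, FormalMultilinearSeries.partialSum_smul]
    abel
  constructor
  · have := sum_eq_zero_of_sum_zpow_smul_isBigO he' hlaurent
    simpa [a', sum_disjSum, FormalMultilinearSeries.partialSum, ← sub_eq_add_neg, sub_eq_zero]
      using this
  · have hfiber := sum_filter_eq_zero_of_sum_zpow_smul_isBigO he' hlaurent 0
    rw [sum_filter, sum_disjSum] at hfiber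
    rw [p.partialSum_zero N x, sum_filter, sum_filter, ← sub_eq_zero]
    convert hfiber using 1
    simp [a', e', sub_eq_add_neg, ← sum_neg_distrib, neg_ite]
    rfl -- the two sides differ only in their `Decidable` instances

end PowerSeries

open Polynomial in
theorem exists_sum_mul_pow_eq_ite (K : Type*) [Field K] [CharZero K] (D m : ℕ) :
    ∃ w : ℕ → K, ∀ i ≤ D, ∑ n ∈ range (D + 1), w n * (n : K) ^ i = if i = m then 1 else 0 := by
  classical
  refine ⟨fun n => (Lagrange.basis (range (D + 1)) (fun n : ℕ => (n : K)) n).coeff m,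
    fun i hi => ?_⟩
  have hinj : Set.InjOn (fun n : ℕ => (n : K)) (range (D + 1)) :=
    fun a _ b _ hab => Nat.cast_injective hab
  have hdeg : (X ^ i : K[X]).degree < (range (D + 1)).card := by
    rw [degree_X_pow, card_range]; exact_mod_cast Nat.lt_succ_of_le hi
  have := congrArg (coeff · m) (Lagrange.eq_interpolate hinj hdeg)
  simp only [coeff_X_pow, Lagrange.interpolate_apply, finsetSum_coeff, coeff_C_mul, eval_pow,
    eval_X] at this
  simp only [this, eq_comm (a := i), mul_comm]

theorem Complex.isBigO_exp_mul_sub_sum (z : ℂ) (n : ℕ) :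
    (fun x : ℂ => exp (z * x) - ∑ k ∈ range n, (z ^ k / k !) * x ^ k) =O[𝓝 0] fun x => x ^ n := by
  have hexp : HasFPowerSeriesAt NormedSpace.exp (NormedSpace.expSeries ℂ ℂ) 0 :=
    NormedSpace.hasFPowerSeriesAt_exp_zero_of_radius_pos
      (by simp [NormedSpace.expSeries_radius_eq_top])
  refine (hexp.isBigO_sub_partialSum_smul z n).congr_left fun x => ?_
  rw [FormalMultilinearSeries.partialSum_smul, ← Complex.exp_eq_exp_ℂ, smul_eq_mul, mul_comm]
  simp only [NormedSpace.expSeries_apply_eq, smul_eq_mul]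
  congr 1
  refine sum_congr rfl fun k _ => ?_
  ring

theorem exists_sum_mul_exp_sub_isBigO {D m : ℕ} (hm : m ≤ D) :
    ∃ w : ℕ → ℂ, (fun x : ℂ => ∑ n ∈ range (D + 1), w n * Complex.exp (n * x) - x ^ m / m !)
      =O[𝓝 0] fun x => x ^ (D + 1) := by
  obtain ⟨w, hw⟩ := exists_sum_mul_pow_eq_ite ℂ D m
  have hterms := IsBigO.fun_sum (s := range (D + 1)) fun (n : ℕ) _ =>
    (Complex.isBigO_exp_mul_sub_sum n (D + 1)).const_mul_left (w n)
  refine ⟨w, hterms.congr_left fun x => ?_⟩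
  have hpoly : ∑ n ∈ range (D + 1), w n * ∑ k ∈ range (D + 1), ((n : ℂ) ^ k / k !) * x ^ k
      = x ^ m / m ! := by
    have hcoeff : ∀ k ∈ range (D + 1), ∑ n ∈ range (D + 1), w n * ((n : ℂ) ^ k / k ! * x ^ k)
        = (if k = m then 1 else 0) * (x ^ k / k !) := fun k hk => by
      rw [← hw k (Nat.lt_succ_iff.1 (mem_range.1 hk)), sum_mul]
      exact sum_congr rfl fun n _ => by ring
    simp_rw [mul_sum]
    rw [sum_comm, sum_congr rfl hcoeff]
    simp [ite_mul, Nat.lt_succ_of_le hm]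
  simp only [mul_sub, sum_sub_distrib, hpoly]

theorem Filter.Eventually.smul_nhdsNE {V : Type*} [NormedAddCommGroup V] [NormedSpace ℝ V]
    {P : V → Prop} (h : ∀ᶠ x in 𝓝 0, P x) (ξ : V) : ∀ᶠ t : ℝ in 𝓝[≠] 0, P (t • ξ) := by
  have hray : Tendsto (fun t : ℝ => t • ξ) (𝓝[≠] 0) (𝓝 0) := by
    simpa using ((continuous_id.smul continuous_const).tendsto (0 : ℝ)).mono_left
      nhdsWithin_le_nhds (f := fun t : ℝ => t • ξ)
  exact hray.eventually h

section

variable {V : Type*} [NormedAddCommGroup V] [NormedSpace ℝ V] {S : Finset V}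
  {pair : V → V → ℝ} {F : V → V → ℂ} {J : Finset ℤ} {Fc : V → ℤ → V → ℂ} {U : Set V}

theorem sum_exp_mul_apply_smul_eq (hpair : ∀ (t : ℝ) ξ x, pair (t • ξ) x = t * pair ξ x)
    (hUcone : ∀ t : ℝ, t ≠ 0 → ∀ ξ ∈ U, t • ξ ∈ U)
    (hhom : ∀ s ∈ S, ∀ j ∈ J, ∀ t : ℝ, t ≠ 0 → ∀ ξ ∈ U,
      Fc s j (t • ξ) = (t : ℂ) ^ j * Fc s j ξ)
    (hdecomp : ∀ s ∈ S, ∀ ξ ∈ U, F s ξ = ∑ j ∈ J, Fc s j ξ) {ξ : V} (hξ : ξ ∈ U) {t : ℝ}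
    (ht : t ≠ 0) (z : ℂ) :
    ∑ s ∈ S, Complex.exp (z * (pair (t • ξ) s : ℂ)) * F s (t • ξ) =
      ∑ j ∈ J, ∑ s ∈ S, (t : ℂ) ^ j * Fc s j ξ * Complex.exp (z * (t * pair ξ s)) := by
  rw [sum_comm]
  refine sum_congr rfl fun s hs => ?_
  rw [hdecomp s hs _ (hUcone t ht ξ hξ), mul_sum]
  refine sum_congr rfl fun j hj => ?_
  rw [hhom s hs j hj t ht ξ hξ, hpair]
  push_cast
  ring

theorem isBigO_sum_exp_mul_sub_sum_zpow_smul
    (hpair : ∀ (t : ℝ) ξ x, pair (t • ξ) x = t * pair ξ x)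
    (hUcone : ∀ t : ℝ, t ≠ 0 → ∀ ξ ∈ U, t • ξ ∈ U)
    (hhom : ∀ s ∈ S, ∀ j ∈ J, ∀ t : ℝ, t ≠ 0 → ∀ ξ ∈ U,
      Fc s j (t • ξ) = (t : ℂ) ^ j * Fc s j ξ)
    (hdecomp : ∀ s ∈ S, ∀ ξ ∈ U, F s ξ = ∑ j ∈ J, Fc s j ξ) {ξ : V} (hξ : ξ ∈ U)
    {D m : ℕ} {w : ℕ → ℂ}
    (hw : (fun x : ℂ => ∑ n ∈ range (D + 1), w n * Complex.exp (n * x) - x ^ m / m !)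
      =O[𝓝 0] fun x => x ^ (D + 1))
    {N : ℤ} (hN : ∀ j ∈ J, N ≤ j + (D + 1)) :
    (fun t : ℝ => ∑ n ∈ range (D + 1), w n *
        ∑ s ∈ S, Complex.exp ((n : ℂ) * (pair (t • ξ) s : ℂ)) * F s (t • ξ) -
      ∑ j ∈ J, t ^ (j + m) • ((1 / (m ! : ℂ)) * ∑ s ∈ S, (pair ξ s : ℂ) ^ m * Fc s j ξ))
      =O[𝓝[≠] 0] fun t => t ^ N := by
  set E : ℂ → ℂ := fun x => ∑ n ∈ range (D + 1), w n * Complex.exp (n * x)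
  have hterm : ∀ j ∈ J, ∀ s ∈ S, (fun t : ℝ => Fc s j ξ * ((t : ℂ) ^ j *
      (E (t * pair ξ s) - (t * pair ξ s) ^ m / m !))) =O[𝓝[≠] 0] fun t => t ^ N := by
    intro j hj s _
    have hray : Tendsto (fun t : ℝ => (t : ℂ) * pair ξ s) (𝓝 0) (𝓝 0) := by
      simpa using (Complex.continuous_ofReal.mul continuous_const).tendsto (0 : ℝ)
        (f := fun t : ℝ => (t : ℂ) * pair ξ s)
    have htail : (fun t : ℝ => E (t * pair ξ s) - (t * pair ξ s) ^ m / m !)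
        =O[𝓝 0] fun t : ℝ => t ^ (D + 1) :=
      (hw.comp_tendsto hray).trans (IsBigO.of_bound (‖(pair ξ s : ℂ)‖ ^ (D + 1))
        (Eventually.of_forall fun t => by simp [mul_pow, mul_comm]))
    have hzpow : (fun t : ℝ => (t : ℂ) ^ j) =O[𝓝[≠] 0] fun t => t ^ j :=
      IsBigO.of_bound 1 (Eventually.of_forall fun t => by simp)
    refine ((hzpow.mul (htail.mono nhdsWithin_le_nhds)).const_mul_left _).trans ?_
    refine ((isBigO_zpow_of_le (hN j hj)).congr' ?_ EventuallyEq.rfl)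
    filter_upwards [self_mem_nhdsWithin] with t (ht : t ≠ 0)
    rw [zpow_add₀ ht]; norm_cast
  refine (IsBigO.fun_sum fun j hj => IsBigO.fun_sum fun s hs => hterm j hj s hs).congr' ?_
    EventuallyEq.rfl
  filter_upwards [self_mem_nhdsWithin] with t (ht : t ≠ 0)
  simp only [sum_exp_mul_apply_smul_eq hpair hUcone hhom hdecomp hξ ht, mul_sum]
  rw [sum_comm (s := range (D + 1)), ← sum_sub_distrib]
  refine sum_congr rfl fun j _ => ?_
  rw [sum_comm (s := range (D + 1)), Complex.real_smul, Complex.ofReal_zpow, mul_sum,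
    ← sum_sub_distrib]
  refine sum_congr rfl fun s _ => ?_
  rw [zpow_add₀ (Complex.ofReal_ne_zero.2 ht), zpow_natCast, mul_sub, mul_sub, mul_sum, mul_sum]
  congr 1
  · exact sum_congr rfl fun n _ => by ring
  · ring


theorem partialSum_eq_of_hasFPowerSeriesAt_sum_mul
    (hpair : ∀ (t : ℝ) ξ x, pair (t • ξ) x = t * pair ξ x)
    (hUcone : ∀ t : ℝ, t ≠ 0 → ∀ ξ ∈ U, t • ξ ∈ U)
    (hhom : ∀ s ∈ S, ∀ j ∈ J, ∀ t : ℝ, t ≠ 0 → ∀ ξ ∈ U,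
      Fc s j (t • ξ) = (t : ℂ) ^ j * Fc s j ξ)
    (hdecomp : ∀ s ∈ S, ∀ ξ ∈ U, F s ξ = ∑ j ∈ J, Fc s j ξ) {G : ℕ → V → ℂ}
    (hG : ∀ n : ℕ, ∀ᶠ ξ in 𝓝 0, ξ ∈ U →
      G n ξ = ∑ s ∈ S, Complex.exp ((n : ℂ) * (pair ξ s : ℂ)) * F s ξ)
    {D m N : ℕ} {w : ℕ → ℂ}
    (hw : (fun x : ℂ => ∑ n ∈ range (D + 1), w n * Complex.exp (n * x) - x ^ m / m !)
      =O[𝓝 0] fun x => x ^ (D + 1))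
    (hJ : ∀ j ∈ J, j + m < N ∧ (N : ℤ) ≤ j + (D + 1)) {q : FormalMultilinearSeries ℝ V ℂ}
    (hq : HasFPowerSeriesAt (fun ξ => ∑ n ∈ range (D + 1), w n * G n ξ) q 0)
    {ξ : V} (hξ : ξ ∈ U) :
    q.partialSum N ξ = ∑ j ∈ J, (1 / (m ! : ℂ)) * ∑ s ∈ S, (pair ξ s : ℂ) ^ m * Fc s j ξ ∧
      q.partialSum N 0 =
        ∑ j ∈ J with j + (m : ℤ) = 0, (1 / (m ! : ℂ)) * ∑ s ∈ S, (pair ξ s : ℂ) ^ m * Fc s j ξ := by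
  refine hq.partialSum_eq_of_isBigO (fun j hj => (hJ j hj).1)
    ((isBigO_sum_exp_mul_sub_sum_zpow_smul hpair hUcone hhom hdecomp hξ hw
      fun j hj => (hJ j hj).2).congr' ?_ EventuallyEq.rfl)
  filter_upwards [(eventually_all_finset _).2 fun n _ => (hG n).smul_nhdsNE ξ,
    self_mem_nhdsWithin] with t hGt (ht : t ≠ 0)
  refine congrArg (· - _) (sum_congr rfl fun n hn => ?_)
  rw [hGt n hn (hUcone t ht ξ hξ)]

end

theorem brion_coefficient_extraction_general (d : ℕ) (S : Finset (Fin d → ℝ))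
    (pair : (Fin d → ℝ) → (Fin d → ℝ) → ℝ)
    (hpair : ∀ ξ x, pair ξ x = ∑ i, ξ i * x i)
    (F : (Fin d → ℝ) → (Fin d → ℝ) → ℂ)
    (J : Finset ℤ) (Fc : (Fin d → ℝ) → ℤ → (Fin d → ℝ) → ℂ)
    (U : Set (Fin d → ℝ))
    (hUcone : ∀ t : ℝ, t ≠ 0 → ∀ ξ ∈ U, t • ξ ∈ U)
    (hhom : ∀ s ∈ S, ∀ j ∈ J, ∀ t : ℝ, t ≠ 0 → ∀ ξ ∈ U,
      Fc s j (t • ξ) = (t : ℂ) ^ j * Fc s j ξ)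
    (hzero : ∀ s ∈ S, ∀ j : ℤ, j ∉ J → Fc s j = 0)
    (hdecomp : ∀ s ∈ S, ∀ ξ ∈ U, F s ξ = ∑ j ∈ J, Fc s j ξ)
    (hanalytic : ∀ n : ℕ, ∃ G : (Fin d → ℝ) → ℂ, AnalyticAt ℝ G 0 ∧
      ∀ᶠ ξ in nhds (0 : Fin d → ℝ), ξ ∈ U →
        G ξ = ∑ s ∈ S, Complex.exp ((n : ℂ) * (pair ξ s : ℂ)) * F s ξ) :
    ∀ m : ℕ, ∃ H : (Fin d → ℝ) → ℂ, AnalyticAt ℝ H 0 ∧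
      (∀ᶠ ξ in nhds (0 : Fin d → ℝ), ξ ∈ U →
        H ξ = (1 / (m.factorial : ℂ)) * ∑ s ∈ S, (pair ξ s : ℂ) ^ m * F s ξ) ∧
      (∀ ξ ∈ U, H 0 = (1 / (m.factorial : ℂ)) *
        ∑ s ∈ S, (pair ξ s : ℂ) ^ m * Fc s (-(m : ℤ)) ξ) := by
  intro m
  have hpair_smul : ∀ (t : ℝ) ξ x, pair (t • ξ) x = t * pair ξ x := fun t ξ x => by
    simp only [hpair, Pi.smul_apply, smul_eq_mul, mul_sum, mul_assoc]
  obtain ⟨B, hB⟩ : ∃ B : ℕ, ∀ j ∈ J, j.natAbs ≤ B := ⟨J.sup Int.natAbs, fun j hj => le_sup hj⟩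
  -- `B + m + 1` exceeds every exponent `j + m`, and with `D = 2 * B + m` the error
  -- `O(t ^ (j + D + 1))` of the weighted exponentials is `O(t ^ (B + m + 1))`.
  have hJ : ∀ j ∈ J, j + m < (B + m + 1 : ℕ) ∧ ((B + m + 1 : ℕ) : ℤ) ≤ j + ((2 * B + m : ℕ) + 1) :=
    fun j hj => by have := hB j hj; push_cast; omega
  obtain ⟨w, hw⟩ := exists_sum_mul_exp_sub_isBigO (D := 2 * B + m) (m := m) (by omega)
  choose G hG hGeq using hanalytic
  obtain ⟨q, hq⟩ : AnalyticAt ℝ (fun ξ => ∑ n ∈ range (2 * B + m + 1), w n * G n ξ) 0 :=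
    Finset.analyticAt_fun_sum _ fun n _ => analyticAt_const.mul (hG n)
  have hexpansion := fun ξ (hξ : ξ ∈ U) =>
    partialSum_eq_of_hasFPowerSeriesAt_sum_mul hpair_smul hUcone hhom hdecomp hGeq hw hJ hq hξ
  refine ⟨q.partialSum (B + m + 1), q.analyticAt_partialSum _ _,
    Eventually.of_forall fun ξ hξ => ?_, fun ξ hξ => ?_⟩
  · rw [(hexpansion ξ hξ).1, ← mul_sum, sum_comm]
    refine congrArg _ (sum_congr rfl fun s hs => ?_)
    rw [hdecomp s hs ξ hξ, mul_sum]
  · rw [(hexpansion ξ hξ).2, ← mul_sum, sum_filter]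
    simp_rw [add_eq_zero_iff_eq_neg]
    rw [sum_ite_eq']
    split_ifs with hmJ
    · rfl
    · rw [sum_eq_zero fun s hs => by rw [hzero s hs _ hmJ, Pi.zero_apply, mul_zero], mul_zero]

/-- Extraction of Ehrhart coefficients from Brion's formula.  `S` is the vertex set of a
polytope `p` in `ℝ^d`.  Each vertex contributes a meromorphic germ `F s` at `0` in the dual
space, belonging to the space of quotients of analytic germs by products of linear forms:
on a scaling-stable dense open set `U`, `F s` decomposes as a finite sum of components
`Fc s j` homogeneous of degree `j ∈ J`.  If for every `n ∈ ℕ` the combination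
`∑_s e^{n⟨ξ,s⟩} F_s(ξ)` extends analytically at `ξ = 0`, then for every `m` the function
`(1/m!) ∑_s ⟨ξ,s⟩^m F_s(ξ)` extends analytically at `0`, and its value at `0` is the
(constant) degree-zero term `(1/m!) ∑_s ⟨ξ,s⟩^m (F_s)_{[-m]}(ξ)`. -/
theorem brion_coefficient_extraction (d : ℕ) (S : Finset (Fin d → ℝ))
    (p : Set (Fin d → ℝ)) (hp : p = convexHull ℝ (S : Set (Fin d → ℝ)))
    (hvert : ∀ s ∈ S, s ∈ Set.extremePoints ℝ p)
    (pair : (Fin d → ℝ) → (Fin d → ℝ) → ℝ)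
    (hpair : ∀ ξ x, pair ξ x = ∑ i, ξ i * x i)
    (F : (Fin d → ℝ) → (Fin d → ℝ) → ℂ)
    (J : Finset ℤ) (Fc : (Fin d → ℝ) → ℤ → (Fin d → ℝ) → ℂ)
    (U : Set (Fin d → ℝ)) (hUopen : IsOpen U) (hUdense : Dense U)
    (hUcone : ∀ t : ℝ, t ≠ 0 → ∀ ξ ∈ U, t • ξ ∈ U)
    (hhom : ∀ s ∈ S, ∀ j ∈ J, ∀ t : ℝ, t ≠ 0 → ∀ ξ ∈ U,
      Fc s j (t • ξ) = (t : ℂ) ^ j * Fc s j ξ)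
    (hzero : ∀ s ∈ S, ∀ j : ℤ, j ∉ J → Fc s j = 0)
    (hdecomp : ∀ s ∈ S, ∀ ξ ∈ U, F s ξ = ∑ j ∈ J, Fc s j ξ)
    (hanalytic : ∀ n : ℕ, ∃ G : (Fin d → ℝ) → ℂ, AnalyticAt ℝ G 0 ∧
      ∀ᶠ ξ in nhds (0 : Fin d → ℝ), ξ ∈ U →
        G ξ = ∑ s ∈ S, Complex.exp ((n : ℂ) * (pair ξ s : ℂ)) * F s ξ) :
    ∀ m : ℕ, ∃ H : (Fin d → ℝ) → ℂ, AnalyticAt ℝ H 0 ∧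
      (∀ᶠ ξ in nhds (0 : Fin d → ℝ), ξ ∈ U →
        H ξ = (1 / (m.factorial : ℂ)) * ∑ s ∈ S, (pair ξ s : ℂ) ^ m * F s ξ) ∧
      (∀ ξ ∈ U, H 0 = (1 / (m.factorial : ℂ)) *
        ∑ s ∈ S, (pair ξ s : ℂ) ^ m * Fc s (-(m : ℤ)) ξ) :=
  brion_coefficient_extraction_general d S pair hpair F J Fc U hUcone hhom hzero hdecomp hanalytic
end

section
/- Let v₁, v₂, u be as follows: v₁, v₂ ∈ ℤ² primitive with det(v₁,v₂) > 0, u ∈ ℤ² primitive with det(u,v₂) > 0 and det(u,v₁) ≠ 0, and u not on the lines ℝv₁, ℝv₂. Define φ(ξ) = −(1/⟨ξ,u⟩)[1/(1−e^{⟨ξ,v₂⟩/det(u,v₂)}) − 1/(1−e^{⟨ξ,v₁⟩/det(u,v₁)})]. Then the product ⟨ξ,v₁⟩⟨ξ,v₂⟩ φ(ξ) extends to an analytic function in a neighborhood of ξ = 0 in (ℝ²)*. -/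
/-! Put `a = ⟨ξ,v₁⟩/det(u,v₁)` and `b = ⟨ξ,v₂⟩/det(u,v₂)`. Pairing
`det(v₁,v₂) u = det(u,v₂) v₁ - det(u,v₁) v₂` with `ξ` gives `b - a = c ⟨ξ,u⟩` for a constant `c`,
so that, with `E x = (exp x - 1)/x`,
`a b / ⟨ξ,u⟩ * (1/(1 - exp b) - 1/(1 - exp a))`
`  = a/(1 - exp a) * b/(1 - exp b) * exp a * c * E (b - a)`.
Every factor on the right is analytic at `0`: `E = dslope exp 0` is the divided difference of an
analytic function, and `x/(1 - exp x) = -1/E x` with `E 0 = 1`. -/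

open Real

theorem AnalyticAt.dslope {𝕜 E : Type*} [NontriviallyNormedField 𝕜] [NormedAddCommGroup E]
    [NormedSpace 𝕜 E] {f : 𝕜 → E} {a : 𝕜} (hf : AnalyticAt 𝕜 f a) :
    AnalyticAt 𝕜 (dslope f a) a :=
  let ⟨p, hp⟩ := hf
  ⟨p.fslope, hp.has_fpower_series_dslope_fslope⟩

theorem analyticAt_apply {𝕜 ι : Type*} [NontriviallyNormedField 𝕜] [Fintype ι] (i : ι)
    (x : ι → 𝕜) : AnalyticAt 𝕜 (fun ξ : ι → 𝕜 => ξ i) x :=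
  (ContinuousLinearMap.proj (R := 𝕜) (φ := fun _ : ι => 𝕜) i).analyticAt x

lemma one_sub_exp_ne_zero {x : ℝ} (hx : x ≠ 0) : 1 - exp x ≠ 0 :=
  sub_ne_zero.2 (Ne.symm ((exp_eq_one_iff x).not.2 hx))

lemma exists_analyticAt_eq_div_one_sub_exp :
    ∃ g : ℝ → ℝ, AnalyticAt ℝ g 0 ∧ ∀ x ≠ 0, g x = x / (1 - exp x) := by
  refine ⟨fun x => -(dslope exp 0 x)⁻¹, (analyticAt_rexp.dslope.inv ?_).neg, fun x hx => ?_⟩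
  · simp [dslope_same, Real.deriv_exp]
  · dsimp only
    rw [dslope_of_ne _ hx, slope_def_field, exp_zero, sub_zero, inv_div, ← neg_sub (exp x) 1,
      div_neg]

lemma mul_div_mul_sub_one_div_one_sub_exp {a b c s : ℝ} (ha : a ≠ 0) (hb : b ≠ 0) (hs : s ≠ 0)
    (hba : b - a = c * s) :
    a * b / s * (1 / (1 - exp b) - 1 / (1 - exp a)) =
      a / (1 - exp a) * (b / (1 - exp b)) * exp a * (c * dslope exp 0 (b - a)) := by
  have hE : (b - a) * dslope exp 0 (b - a) = exp (b - a) - 1 := by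
    simpa using sub_smul_dslope exp 0 (b - a)
  have hexp : exp b - exp a = exp a * (c * s * dslope exp 0 (b - a)) := by
    rw [← hba, hE, exp_sub]
    field_simp
  have := one_sub_exp_ne_zero ha
  have := one_sub_exp_ne_zero hb
  field_simp
  linear_combination hexp

theorem exists_analyticAt_eq_mul_div_mul_sub_one_div_one_sub_exp {E : Type*}
    [NormedAddCommGroup E] [NormedSpace ℝ E] {f₁ f₂ s : E → ℝ} {x₀ : E} (c : ℝ)
    (hf₁ : AnalyticAt ℝ f₁ x₀) (hf₂ : AnalyticAt ℝ f₂ x₀) (hf₁x₀ : f₁ x₀ = 0)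
    (hf₂x₀ : f₂ x₀ = 0) (hs : ∀ x, f₂ x - f₁ x = c * s x) :
    ∃ g : E → ℝ, AnalyticAt ℝ g x₀ ∧ ∀ x, f₁ x ≠ 0 → f₂ x ≠ 0 → s x ≠ 0 →
      g x = f₁ x * f₂ x / s x * (1 / (1 - exp (f₂ x)) - 1 / (1 - exp (f₁ x))) := by
  obtain ⟨h, hh, hh_eq⟩ := exists_analyticAt_eq_div_one_sub_exp
  refine ⟨fun x => h (f₁ x) * h (f₂ x) * exp (f₁ x) * (c * dslope exp 0 (f₂ x - f₁ x)), ?_,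
    fun x h₁ h₂ hsx => ?_⟩
  · have hh₁ := hh.comp_of_eq hf₁ hf₁x₀
    have hh₂ := hh.comp_of_eq hf₂ hf₂x₀
    have hE := (analyticAt_rexp (x := 0)).dslope.comp_of_eq (hf₂.sub hf₁)
      (by simp [hf₁x₀, hf₂x₀])
    exact ((hh₁.mul hh₂).mul (analyticAt_rexp.comp hf₁)).mul (analyticAt_const.mul hE)
  · dsimp only
    rw [mul_div_mul_sub_one_div_one_sub_exp h₁ h₂ hsx (hs x), hh_eq _ h₁, hh_eq _ h₂]

theorem mixed_valuation_product_analytic_general (v₁ v₂ u : Fin 2 → ℤ)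
    (hdet2 : 0 < u 0 * v₂ 1 - u 1 * v₂ 0)
    (hdet1 : u 0 * v₁ 1 - u 1 * v₁ 0 ≠ 0) :
    let pair : (Fin 2 → ℝ) → (Fin 2 → ℤ) → ℝ := fun ξ w => ξ 0 * (w 0 : ℝ) + ξ 1 * (w 1 : ℝ)
    let φ : (Fin 2 → ℝ) → ℝ := fun ξ =>
      -(1 / pair ξ u) *
        (1 / (1 - Real.exp (pair ξ v₂ / ((u 0 * v₂ 1 - u 1 * v₂ 0 : ℤ) : ℝ))) -
         1 / (1 - Real.exp (pair ξ v₁ / ((u 0 * v₁ 1 - u 1 * v₁ 0 : ℤ) : ℝ))))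
    ∃ g : (Fin 2 → ℝ) → ℝ, AnalyticAt ℝ g 0 ∧
      ∀ᶠ ξ in nhds (0 : Fin 2 → ℝ),
        (pair ξ v₁ ≠ 0 ∧ pair ξ v₂ ≠ 0 ∧ pair ξ u ≠ 0) →
          g ξ = pair ξ v₁ * pair ξ v₂ * φ ξ := by
  intro pair φ
  set d₁ : ℝ := ((u 0 * v₁ 1 - u 1 * v₁ 0 : ℤ) : ℝ)
  set d₂ : ℝ := ((u 0 * v₂ 1 - u 1 * v₂ 0 : ℤ) : ℝ)
  set D : ℝ := ((v₁ 0 * v₂ 1 - v₁ 1 * v₂ 0 : ℤ) : ℝ)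
  have hd₁ : d₁ ≠ 0 := Int.cast_ne_zero.2 hdet1
  have hd₂ : d₂ ≠ 0 := Int.cast_ne_zero.2 hdet2.ne'
  have hpair (w : Fin 2 → ℤ) : AnalyticAt ℝ (fun ξ => pair ξ w) 0 :=
    ((analyticAt_apply 0 0).mul analyticAt_const).add ((analyticAt_apply 1 0).mul analyticAt_const)
  -- `det(v₁,v₂) u = det(u,v₂) v₁ - det(u,v₁) v₂`, paired with `ξ`
  have hcramer (ξ : Fin 2 → ℝ) :
      pair ξ v₂ / d₂ - pair ξ v₁ / d₁ = -D / (d₁ * d₂) * pair ξ u := by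
    field_simp
    simp only [pair, d₁, d₂, D]
    push_cast
    ring
  obtain ⟨g, hg, hg_eq⟩ := exists_analyticAt_eq_mul_div_mul_sub_one_div_one_sub_exp
    (f₁ := fun ξ => pair ξ v₁ / d₁) (f₂ := fun ξ => pair ξ v₂ / d₂) (-D / (d₁ * d₂))
    (hpair v₁).div_const (hpair v₂).div_const (by simp [pair]) (by simp [pair]) hcramer
  refine ⟨fun ξ => -(d₁ * d₂) * g ξ, analyticAt_const.mul hg, .of_forall ?_⟩
  rintro ξ ⟨h₁, h₂, hu⟩
  simp only [hg_eq ξ (div_ne_zero h₁ hd₁) (div_ne_zero h₂ hd₂) hu, φ]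
  field_simp
  rfl

/-- The product `⟨ξ,v₁⟩⟨ξ,v₂⟩ φ(ξ)`, where `φ` is the mixed valuation `S^L(𝔞)(ξ)` of the
cone `𝔞 = ℝ₊v₁ + ℝ₊v₂` with `L = ℝu` transverse to both edges (formula (5)),
extends analytically near `ξ = 0`. -/
theorem mixed_valuation_product_analytic (v₁ v₂ u : Fin 2 → ℤ)
    (hv₁ : IsCoprime (v₁ 0) (v₁ 1)) (hv₂ : IsCoprime (v₂ 0) (v₂ 1))
    (hu : IsCoprime (u 0) (u 1))
    (hdet : 0 < v₁ 0 * v₂ 1 - v₁ 1 * v₂ 0)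
    (hdet2 : 0 < u 0 * v₂ 1 - u 1 * v₂ 0)
    (hdet1 : u 0 * v₁ 1 - u 1 * v₁ 0 ≠ 0) :
    let pair : (Fin 2 → ℝ) → (Fin 2 → ℤ) → ℝ := fun ξ w => ξ 0 * (w 0 : ℝ) + ξ 1 * (w 1 : ℝ)
    let φ : (Fin 2 → ℝ) → ℝ := fun ξ =>
      -(1 / pair ξ u) *
        (1 / (1 - Real.exp (pair ξ v₂ / ((u 0 * v₂ 1 - u 1 * v₂ 0 : ℤ) : ℝ))) -
         1 / (1 - Real.exp (pair ξ v₁ / ((u 0 * v₁ 1 - u 1 * v₁ 0 : ℤ) : ℝ))))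
    ∃ g : (Fin 2 → ℝ) → ℝ, AnalyticAt ℝ g 0 ∧
      ∀ᶠ ξ in nhds (0 : Fin 2 → ℝ),
        (pair ξ v₁ ≠ 0 ∧ pair ξ v₂ ≠ 0 ∧ pair ξ u ≠ 0) →
          g ξ = pair ξ v₁ * pair ξ v₂ * φ ξ :=
  mixed_valuation_product_analytic_general v₁ v₂ u hdet2 hdet1
end
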